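/- arXiv:2312.05419 — 10 statements merged into one kernel-verified Lean document; each statement's English description precedes it below -/
import Mathlib

section
/- Consider an NI system (f, h) with storage function V and an OSNI system (f̂, ĥ) with storage function V̂ and degree of output strictness ε > 0, interconnected in the closed loop where the OSNI controller's output is advanced by one step (SAOSNI controller): û_k = h(x_k) and u_k = ĥ(f̂(x̂_k, h(x_k))). Then along every closed-loop trajectory (x_k, x̂_k), the function W satisfies W(x_{k+1}, x̂_{k+1}) − W(x_k, x̂_k) ≤ −ε ‖ĥ(x̂_{k+1}) − ĥ(x̂_k)‖² ≤ 0 for all k. -/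
open scoped RealInnerProductSpace

section Interconnection

variable {X Y U : Type*} [NormedAddCommGroup U] [InnerProductSpace ℝ U]

theorem inner_sub_right_add_inner_sub_right (a a' b b' : U) :
    ⟪b', a' - a⟫ + ⟪a, b' - b⟫ = ⟪a', b'⟫ - ⟪a, b⟫ := by
  rw [inner_sub_right, inner_sub_right, real_inner_comm b' a', real_inner_comm b' a]
  ring

/-- The plant's supply `⟪hh y', h x' - h x⟫` and the controller's supply `⟪h x, hh y' - hh y⟫`
sum to the increment of the cross term `⟪h x, hh y⟫`, so they cancel in the storage `W`. -/
theorem interconnection_storage_sub_le (V : X → ℝ) (Vh : Y → ℝ) (h : X → U) (hh : Y → U)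
    {ε : ℝ} {x x' : X} {y y' : Y}
    (hNI : V x' - V x ≤ ⟪hh y', h x' - h x⟫)
    (hOSNI : Vh y' - Vh y ≤ ⟪h x, hh y' - hh y⟫ - ε * ‖hh y' - hh y‖ ^ 2) :
    (V x' + Vh y' - ⟪h x', hh y'⟫) - (V x + Vh y - ⟪h x, hh y⟫) ≤ -ε * ‖hh y' - hh y‖ ^ 2 := by
  linarith [inner_sub_right_add_inner_sub_right (h x) (h x') (hh y) (hh y')]

end Interconnection

theorem NI_SAOSNI_W_decrease_general
    (n m p : ℕ)
    (f : EuclideanSpace ℝ (Fin n) → EuclideanSpace ℝ (Fin p) → EuclideanSpace ℝ (Fin n))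
    (h : EuclideanSpace ℝ (Fin n) → EuclideanSpace ℝ (Fin p))
    (fh : EuclideanSpace ℝ (Fin m) → EuclideanSpace ℝ (Fin p) → EuclideanSpace ℝ (Fin m))
    (hh : EuclideanSpace ℝ (Fin m) → EuclideanSpace ℝ (Fin p))
    (V : EuclideanSpace ℝ (Fin n) → ℝ)
    (Vh : EuclideanSpace ℝ (Fin m) → ℝ)
    (ε : ℝ) (hε : 0 < ε)
    (hNI : ∀ (x : EuclideanSpace ℝ (Fin n)) (u : EuclideanSpace ℝ (Fin p)),
      V (f x u) - V x ≤ ⟪u, h (f x u) - h x⟫)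
    (hOSNI : ∀ (xh : EuclideanSpace ℝ (Fin m)) (uh : EuclideanSpace ℝ (Fin p)),
      Vh (fh xh uh) - Vh xh ≤ ⟪uh, hh (fh xh uh) - hh xh⟫ - ε * ‖hh (fh xh uh) - hh xh‖ ^ 2)
    -- closed-loop trajectory: û_k = h(x_k), u_k = hh(f̂(y_k, h(x_k)))
    (x : ℕ → EuclideanSpace ℝ (Fin n)) (xh : ℕ → EuclideanSpace ℝ (Fin m))
    (hx : ∀ k, x (k + 1) = f (x k) (hh (fh (xh k) (h (x k)))))
    (hxh : ∀ k, xh (k + 1) = fh (xh k) (h (x k)))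
    (W : EuclideanSpace ℝ (Fin n) → EuclideanSpace ℝ (Fin m) → ℝ)
    (hW : ∀ x' xh', W x' xh' = V x' + Vh xh' - ⟪h x', hh xh'⟫) :
    ∀ k, W (x (k + 1)) (xh (k + 1)) - W (x k) (xh k) ≤ -ε * ‖hh (xh (k + 1)) - hh (xh k)‖ ^ 2
      ∧ -ε * ‖hh (xh (k + 1)) - hh (xh k)‖ ^ 2 ≤ 0 := by
  intro k
  have plant_step : V (x (k + 1)) - V (x k) ≤ ⟪hh (xh (k + 1)), h (x (k + 1)) - h (x k)⟫ := by
    rw [hx k, hxh k]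
    exact hNI _ _
  have controller_step : Vh (xh (k + 1)) - Vh (xh k)
      ≤ ⟪h (x k), hh (xh (k + 1)) - hh (xh k)⟫ - ε * ‖hh (xh (k + 1)) - hh (xh k)‖ ^ 2 := by
    rw [hxh k]
    exact hOSNI _ _
  rw [hW, hW]
  exact ⟨interconnection_storage_sub_le V Vh h hh plant_step controller_step,
    mul_nonpos_of_nonpos_of_nonneg (neg_nonpos.2 hε.le) (sq_nonneg _)⟩

/-- Along every closed-loop trajectory of an NI plant and an SAOSNI controller,
the function `W(x,x̂) = V(x) + V̂(x̂) − h(x)ᵀ ĥ(x̂)` satisfies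
`W(x_{k+1}, x̂_{k+1}) − W(x_k, x̂_k) ≤ −ε ‖ĥ(x̂_{k+1}) − ĥ(x̂_k)‖² ≤ 0`. -/
theorem NI_SAOSNI_W_decrease
    (n m p : ℕ)
    (f : EuclideanSpace ℝ (Fin n) → EuclideanSpace ℝ (Fin p) → EuclideanSpace ℝ (Fin n))
    (h : EuclideanSpace ℝ (Fin n) → EuclideanSpace ℝ (Fin p))
    (fh : EuclideanSpace ℝ (Fin m) → EuclideanSpace ℝ (Fin p) → EuclideanSpace ℝ (Fin m))
    (hh : EuclideanSpace ℝ (Fin m) → EuclideanSpace ℝ (Fin p))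
    (V : EuclideanSpace ℝ (Fin n) → ℝ)
    (Vh : EuclideanSpace ℝ (Fin m) → ℝ)
    (ε : ℝ) (hε : 0 < ε)
    -- NI: V continuous positive definite plus dissipation inequality
    (hVcont : Continuous V) (hV0 : V 0 = 0) (hVpos : ∀ x : EuclideanSpace ℝ (Fin n), x ≠ 0 → 0 < V x)
    (hNI : ∀ (x : EuclideanSpace ℝ (Fin n)) (u : EuclideanSpace ℝ (Fin p)),
      V (f x u) - V x ≤ ⟪u, h (f x u) - h x⟫)
    -- OSNI: V̂ continuous positive definite plus strict dissipation inequality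
    (hVhcont : Continuous Vh) (hVh0 : Vh 0 = 0)
    (hVhpos : ∀ xh : EuclideanSpace ℝ (Fin m), xh ≠ 0 → 0 < Vh xh)
    (hOSNI : ∀ (xh : EuclideanSpace ℝ (Fin m)) (uh : EuclideanSpace ℝ (Fin p)),
      Vh (fh xh uh) - Vh xh ≤ ⟪uh, hh (fh xh uh) - hh xh⟫ - ε * ‖hh (fh xh uh) - hh xh‖ ^ 2)
    -- closed-loop trajectory: û_k = h(x_k), u_k = ĥ(f̂(x̂_k, h(x_k)))
    (x : ℕ → EuclideanSpace ℝ (Fin n)) (xh : ℕ → EuclideanSpace ℝ (Fin m))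
    (hx : ∀ k, x (k + 1) = f (x k) (hh (fh (xh k) (h (x k)))))
    (hxh : ∀ k, xh (k + 1) = fh (xh k) (h (x k)))
    (W : EuclideanSpace ℝ (Fin n) → EuclideanSpace ℝ (Fin m) → ℝ)
    (hW : ∀ x' xh', W x' xh' = V x' + Vh xh' - ⟪h x', hh xh'⟫) :
    ∀ k, W (x (k + 1)) (xh (k + 1)) - W (x k) (xh k) ≤ -ε * ‖hh (xh (k + 1)) - hh (xh k)‖ ^ 2
      ∧ -ε * ‖hh (xh (k + 1)) - hh (xh k)‖ ^ 2 ≤ 0 :=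
  NI_SAOSNI_W_decrease_general n m p f h fh hh V Vh ε hε hNI hOSNI x xh hx hxh W hW
end

section
/- Consider the closed-loop interconnection of an NI system (f, h, V) and an SAOSNI controller built from an OSNI system (f̂, ĥ, V̂) with degree of output strictness ε > 0, and suppose the function W(x, x̂) = V(x) + V̂(x̂) − h(x)ᵀ ĥ(x̂) is positive definite. Then along every closed-loop trajectory (x_k, x̂_k): (i) the sequence W(x_k, x̂_k) is nonincreasing in k; (ii) for every N, ε ∑_{k=0}^{N−1} ‖ĥ(x̂_{k+1}) − ĥ(x̂_k)‖² ≤ W(x_0, x̂_0); and (iii) ĥ(x̂_{k+1}) − ĥ(x̂_k) → 0 as k → ∞. -/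
/-!
Adding the NI inequality of the plant, taken with input `ĥ(x̂_{k+1})`, to the OSNI inequality
of the controller, taken with input `h(x_k)`, the cross terms `⟪h(x_k), ĥ(x̂_{k+1})⟫` cancel and
what remains is `W(x_{k+1}, x̂_{k+1}) + ε ‖ĥ(x̂_{k+1}) − ĥ(x̂_k)‖² ≤ W(x_k, x̂_k)`. Since `W ≥ 0`,
telescoping bounds the partial sums of the increments by `W(x_0, x̂_0) / ε`, so the increments are
square-summable and tend to zero.
-/

open Filter Finset Topology
open scoped RealInnerProductSpace

section Telescoping

variable {w e : ℕ → ℝ} {ε : ℝ}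

theorem sum_range_le_sub_of_add_le (hstep : ∀ k, w (k + 1) + e k ≤ w k) (N : ℕ) :
    ∑ k ∈ range N, e k ≤ w 0 - w N := by
  rw [← sum_range_sub']
  exact sum_le_sum fun k _ => by linarith [hstep k]

theorem mul_sum_range_le_of_add_mul_le (hstep : ∀ k, w (k + 1) + ε * e k ≤ w k)
    (hw : ∀ k, 0 ≤ w k) (N : ℕ) : ε * ∑ k ∈ range N, e k ≤ w 0 := by
  rw [mul_sum]
  linarith [sum_range_le_sub_of_add_le hstep N, hw N]

theorem tendsto_zero_of_add_mul_le (hε : 0 < ε) (hstep : ∀ k, w (k + 1) + ε * e k ≤ w k)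
    (hw : ∀ k, 0 ≤ w k) (he : ∀ k, 0 ≤ e k) : Tendsto e atTop (𝓝 0) :=
  (summable_of_sum_range_le he fun N =>
    (le_div_iff₀' hε).2 (mul_sum_range_le_of_add_mul_le hstep hw N)).tendsto_atTop_zero

end Telescoping

theorem tendsto_zero_of_tendsto_norm_sq_zero {α E : Type*} [SeminormedAddCommGroup E]
    {l : Filter α} {v : α → E} (hv : Tendsto (fun a => ‖v a‖ ^ 2) l (𝓝 0)) :
    Tendsto v l (𝓝 0) :=
  tendsto_zero_iff_norm_tendsto_zero.2 <| by
    simpa only [Real.sqrt_sq (norm_nonneg _), Real.sqrt_zero] using hv.sqrt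

section ClosedLoop

variable {X Xh E : Type*} [NormedAddCommGroup E] [InnerProductSpace ℝ E]
  {f : X → E → X} {h : X → E} {fh : Xh → E → Xh} {hh : Xh → E} {V : X → ℝ} {Vh : Xh → ℝ}
  {ε : ℝ}

def coupledStorage (V : X → ℝ) (Vh : Xh → ℝ) (h : X → E) (hh : Xh → E) (x : X) (xh : Xh) : ℝ :=
  V x + Vh xh - ⟪h x, hh xh⟫

theorem coupledStorage_closedLoop_step_le
    (hNI : ∀ x u, V (f x u) - V x ≤ ⟪u, h (f x u) - h x⟫)
    (hOSNI : ∀ xh uh, Vh (fh xh uh) - Vh xh ≤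
      ⟪uh, hh (fh xh uh) - hh xh⟫ - ε * ‖hh (fh xh uh) - hh xh‖ ^ 2)
    (x : X) (xh : Xh) :
    coupledStorage V Vh h hh (f x (hh (fh xh (h x)))) (fh xh (h x))
        + ε * ‖hh (fh xh (h x)) - hh xh‖ ^ 2 ≤ coupledStorage V Vh h hh x xh := by
  have hplant := hNI x (hh (fh xh (h x)))
  have hcontroller := hOSNI xh (h x)
  simp only [inner_sub_right] at hplant hcontroller
  rw [real_inner_comm (h _), real_inner_comm (h x)] at hplant
  unfold coupledStorage
  linarith

end ClosedLoop

theorem NI_SAOSNI_W_monotone_sum_tendsto_general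
    (n m p : ℕ)
    (f : EuclideanSpace ℝ (Fin n) → EuclideanSpace ℝ (Fin p) → EuclideanSpace ℝ (Fin n))
    (h : EuclideanSpace ℝ (Fin n) → EuclideanSpace ℝ (Fin p))
    (fh : EuclideanSpace ℝ (Fin m) → EuclideanSpace ℝ (Fin p) → EuclideanSpace ℝ (Fin m))
    (hh : EuclideanSpace ℝ (Fin m) → EuclideanSpace ℝ (Fin p))
    (V : EuclideanSpace ℝ (Fin n) → ℝ)
    (Vh : EuclideanSpace ℝ (Fin m) → ℝ)
    (ε : ℝ) (hε : 0 < ε)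
    -- NI: V continuous positive definite plus dissipation inequality
    (hNI : ∀ (x : EuclideanSpace ℝ (Fin n)) (u : EuclideanSpace ℝ (Fin p)),
      V (f x u) - V x ≤ ⟪u, h (f x u) - h x⟫)
    -- OSNI: V̂ continuous positive definite plus strict dissipation inequality
    (hOSNI : ∀ (xh : EuclideanSpace ℝ (Fin m)) (uh : EuclideanSpace ℝ (Fin p)),
      Vh (fh xh uh) - Vh xh ≤ ⟪uh, hh (fh xh uh) - hh xh⟫ - ε * ‖hh (fh xh uh) - hh xh‖ ^ 2)
    -- W and its positive definiteness
    (W : EuclideanSpace ℝ (Fin n) → EuclideanSpace ℝ (Fin m) → ℝ)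
    (hW : ∀ x' xh', W x' xh' = V x' + Vh xh' - ⟪h x', hh xh'⟫)
    (hW0 : W 0 0 = 0)
    (hWpos : ∀ (x' : EuclideanSpace ℝ (Fin n)) (xh' : EuclideanSpace ℝ (Fin m)),
      ¬(x' = 0 ∧ xh' = 0) → 0 < W x' xh')
    -- closed-loop trajectory: û_k = h(x_k), u_k = ĥ(f̂(x̂_k, h(x_k)))
    (x : ℕ → EuclideanSpace ℝ (Fin n)) (xh : ℕ → EuclideanSpace ℝ (Fin m))
    (hx : ∀ k, x (k + 1) = f (x k) (hh (fh (xh k) (h (x k)))))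
    (hxh : ∀ k, xh (k + 1) = fh (xh k) (h (x k))) :
    (∀ k, W (x (k + 1)) (xh (k + 1)) ≤ W (x k) (xh k))
    ∧ (∀ N : ℕ, ε * ∑ k ∈ Finset.range N, ‖hh (xh (k + 1)) - hh (xh k)‖ ^ 2 ≤ W (x 0) (xh 0))
    ∧ Filter.Tendsto (fun k => hh (xh (k + 1)) - hh (xh k)) Filter.atTop (nhds 0) := by
  have hWeq : W = coupledStorage V Vh h hh := funext fun a => funext (hW a)
  have hstep : ∀ k, W (x (k + 1)) (xh (k + 1)) + ε * ‖hh (xh (k + 1)) - hh (xh k)‖ ^ 2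
      ≤ W (x k) (xh k) := fun k => by
    rw [hx k, hxh k, hWeq]
    exact coupledStorage_closedLoop_step_le hNI hOSNI (x k) (xh k)
  have hWnonneg : ∀ k, 0 ≤ W (x k) (xh k) := fun k => by
    by_cases hzero : x k = 0 ∧ xh k = 0
    · rw [hzero.1, hzero.2, hW0]
    · exact (hWpos _ _ hzero).le
  refine ⟨fun k => le_of_add_le_of_nonneg_left (hstep k) (by positivity),
    mul_sum_range_le_of_add_mul_le hstep hWnonneg, ?_⟩
  exact tendsto_zero_of_tendsto_norm_sq_zero
    (tendsto_zero_of_add_mul_le hε hstep hWnonneg fun k => by positivity)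

/-- For the closed loop of an NI plant and an SAOSNI controller with `W` positive
definite: (i) `k ↦ W(x_k, x̂_k)` is nonincreasing, (ii) the summed output-increment
energy is bounded by `W(x_0, x̂_0)`, and (iii) `ĥ(x̂_{k+1}) − ĥ(x̂_k) → 0`. -/
theorem NI_SAOSNI_W_monotone_sum_tendsto
    (n m p : ℕ)
    (f : EuclideanSpace ℝ (Fin n) → EuclideanSpace ℝ (Fin p) → EuclideanSpace ℝ (Fin n))
    (h : EuclideanSpace ℝ (Fin n) → EuclideanSpace ℝ (Fin p))
    (fh : EuclideanSpace ℝ (Fin m) → EuclideanSpace ℝ (Fin p) → EuclideanSpace ℝ (Fin m))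
    (hh : EuclideanSpace ℝ (Fin m) → EuclideanSpace ℝ (Fin p))
    (V : EuclideanSpace ℝ (Fin n) → ℝ)
    (Vh : EuclideanSpace ℝ (Fin m) → ℝ)
    (ε : ℝ) (hε : 0 < ε)
    -- NI: V continuous positive definite plus dissipation inequality
    (hVcont : Continuous V) (hV0 : V 0 = 0) (hVpos : ∀ x : EuclideanSpace ℝ (Fin n), x ≠ 0 → 0 < V x)
    (hNI : ∀ (x : EuclideanSpace ℝ (Fin n)) (u : EuclideanSpace ℝ (Fin p)),
      V (f x u) - V x ≤ ⟪u, h (f x u) - h x⟫)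
    -- OSNI: V̂ continuous positive definite plus strict dissipation inequality
    (hVhcont : Continuous Vh) (hVh0 : Vh 0 = 0)
    (hVhpos : ∀ xh : EuclideanSpace ℝ (Fin m), xh ≠ 0 → 0 < Vh xh)
    (hOSNI : ∀ (xh : EuclideanSpace ℝ (Fin m)) (uh : EuclideanSpace ℝ (Fin p)),
      Vh (fh xh uh) - Vh xh ≤ ⟪uh, hh (fh xh uh) - hh xh⟫ - ε * ‖hh (fh xh uh) - hh xh‖ ^ 2)
    -- W and its positive definiteness
    (W : EuclideanSpace ℝ (Fin n) → EuclideanSpace ℝ (Fin m) → ℝ)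
    (hW : ∀ x' xh', W x' xh' = V x' + Vh xh' - ⟪h x', hh xh'⟫)
    (hW0 : W 0 0 = 0)
    (hWpos : ∀ (x' : EuclideanSpace ℝ (Fin n)) (xh' : EuclideanSpace ℝ (Fin m)),
      ¬(x' = 0 ∧ xh' = 0) → 0 < W x' xh')
    -- closed-loop trajectory: û_k = h(x_k), u_k = ĥ(f̂(x̂_k, h(x_k)))
    (x : ℕ → EuclideanSpace ℝ (Fin n)) (xh : ℕ → EuclideanSpace ℝ (Fin m))
    (hx : ∀ k, x (k + 1) = f (x k) (hh (fh (xh k) (h (x k)))))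
    (hxh : ∀ k, xh (k + 1) = fh (xh k) (h (x k))) :
    (∀ k, W (x (k + 1)) (xh (k + 1)) ≤ W (x k) (xh k))
    ∧ (∀ N : ℕ, ε * ∑ k ∈ Finset.range N, ‖hh (xh (k + 1)) - hh (xh k)‖ ^ 2 ≤ W (x 0) (xh 0))
    ∧ Filter.Tendsto (fun k => hh (xh (k + 1)) - hh (xh k)) Filter.atTop (nhds 0) :=
  NI_SAOSNI_W_monotone_sum_tendsto_general n m p f h fh hh V Vh ε hε hNI hOSNI W hW hW0 hWpos x xh
    hx hxh
end

section
/- (Theorem 1) Let f, h, f̂, ĥ be continuous, let (f, h) be NI with storage function V, let (f̂, ĥ) be OSNI with storage function V̂ and degree of output strictness ε > 0, and suppose W(x, x̂) = V(x) + V̂(x̂) − h(x)ᵀ ĥ(x̂) is continuous and positive definite. Assume further (Assumption 1, closed-loop form) that every sequence (z_k, ẑ_k)_{k∈ℕ} satisfying the closed-loop dynamics and ĥ(ẑ_{k+1}) = ĥ(ẑ_k) for all k ∈ ℕ satisfies z_k = 0 and ẑ_k = 0 for all sufficiently large k. Then every bounded closed-loop trajectory (x_k, x̂_k) converges to the origin: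 x_k → 0 and x̂_k → 0 as k → ∞. -/
/-!
`W` is a Lyapunov function for the closed loop: the NI and OSNI inequalities add up to
`W(next) + ε ‖ĥ(x̂_{k+1}) - ĥ(x̂_k)‖² ≤ W(current)`, the cross terms `h(x)ᵀ ĥ(x̂)` cancelling
thanks to the step advance. Along a bounded trajectory `W` decreases to some limit `L`, and by
continuity `W` equals `L` along the whole orbit of any cluster point (LaSalle). On that orbit the
controller output is therefore stationary, so by Assumption 1 the orbit reaches the origin and
`L = W(0) = 0`; as `W` is positive definite, every cluster point is the origin.
-/

open Filter Topology
open scoped RealInnerProductSpace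

theorem MapClusterPt.eq_of_tendsto {α Y : Type*} [TopologicalSpace Y] [T2Space Y]
    {F : Filter α} {u : α → Y} {y L : Y} (hy : MapClusterPt y F u) (hu : Tendsto u F (𝓝 L)) :
    y = L :=
  eq_of_nhds_neBot (hy.clusterPt.mono hu)

section LaSalle

variable {X : Type*} [TopologicalSpace X] {Φ : X → X}

theorem MapClusterPt.iterate {q q₀ : X} (hΦ : Continuous Φ)
    (hq : MapClusterPt q atTop fun k => Φ^[k] q₀) (i : ℕ) :
    MapClusterPt (Φ^[i] q) atTop fun k => Φ^[k] q₀ := by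
  refine MapClusterPt.of_comp (tendsto_atTop_mono (fun k => Nat.le_add_left k i) tendsto_id) ?_
  have := hq.continuousAt_comp (hΦ.iterate i).continuousAt
  simpa only [Function.comp_def, ← Function.iterate_add_apply] using this

/-- LaSalle's invariance principle, for a Lyapunov function with strict global minimum `x₀`. -/
theorem tendsto_iterate_of_lyapunov {W : X → ℝ} {x₀ : X} (hΦ : Continuous Φ) (hW : Continuous W)
    (hdec : ∀ q, W (Φ q) ≤ W q) (hmin : ∀ q, q ≠ x₀ → W x₀ < W q)
    (hinv : ∀ q, (∀ i, W (Φ^[i] q) = W q) → ∃ k, Φ^[k] q = x₀)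
    {K : Set X} (hK : IsCompact K) {q₀ : X} (horbit : ∀ k, Φ^[k] q₀ ∈ K) :
    Tendsto (fun k => Φ^[k] q₀) atTop (𝓝 x₀) := by
  have hanti : Antitone fun k => W (Φ^[k] q₀) := antitone_nat_of_succ_le fun k => by
    rw [Function.iterate_succ_apply']
    exact hdec _
  have hbdd : BddBelow (Set.range fun k => W (Φ^[k] q₀)) := by
    refine ⟨W x₀, Set.forall_mem_range.2 fun k => ?_⟩
    rcases eq_or_ne (Φ^[k] q₀) x₀ with hk | hk
    · rw [hk]
    · exact (hmin _ hk).le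
  have hlim := tendsto_atTop_ciInf hanti hbdd
  have hcluster {a : X} (ha : MapClusterPt a atTop fun k => Φ^[k] q₀) :
      W a = ⨅ k, W (Φ^[k] q₀) :=
    (ha.continuousAt_comp hW.continuousAt).eq_of_tendsto hlim
  obtain ⟨q, -, hq⟩ := hK.exists_mapClusterPt (f := atTop)
    (tendsto_principal.2 (Eventually.of_forall horbit))
  obtain ⟨k, hk⟩ := hinv q fun i => (hcluster (hq.iterate hΦ i)).trans (hcluster hq).symm
  have hinf : ⨅ k, W (Φ^[k] q₀) = W x₀ := by rw [← hk, hcluster (hq.iterate hΦ k)]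
  refine hK.tendsto_nhds_of_unique_mapClusterPt (Eventually.of_forall horbit) fun a _ ha => ?_
  by_contra hne
  exact (hmin a hne).ne' ((hcluster ha).trans hinf)

end LaSalle

section ClosedLoop

variable {X Xh E : Type*} {f : X → E → X} {h : X → E} {fh : Xh → E → Xh} {hh : Xh → E}

def closedLoop (f : X → E → X) (h : X → E) (fh : Xh → E → Xh) (hh : Xh → E) (q : X × Xh) :
    X × Xh :=
  (f q.1 (hh (fh q.2 (h q.1))), fh q.2 (h q.1))

theorem continuous_closedLoop [TopologicalSpace X] [TopologicalSpace Xh] [TopologicalSpace E]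
    (hfc : Continuous (Function.uncurry f)) (hhc : Continuous h)
    (hfhc : Continuous (Function.uncurry fh)) (hhhc : Continuous hh) :
    Continuous (closedLoop f h fh hh) := by
  have hctrl : Continuous fun q : X × Xh => fh q.2 (h q.1) :=
    hfhc.comp (continuous_snd.prodMk (hhc.comp continuous_fst))
  exact (hfc.comp (continuous_fst.prodMk (hhhc.comp hctrl))).prodMk hctrl

theorem closedLoop_iterate {x : ℕ → X} {xh : ℕ → Xh}
    (hx : ∀ k, x (k + 1) = f (x k) (hh (fh (xh k) (h (x k)))))
    (hxh : ∀ k, xh (k + 1) = fh (xh k) (h (x k))) (k : ℕ) :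
    (closedLoop f h fh hh)^[k] (x 0, xh 0) = (x k, xh k) := by
  induction k with
  | zero => rfl
  | succ k ih => rw [Function.iterate_succ_apply', ih, closedLoop, hx, hxh]

variable [NormedAddCommGroup E] [InnerProductSpace ℝ E] {V : X → ℝ} {Vh : Xh → ℝ} {ε : ℝ}

def closedLoopStorage (V : X → ℝ) (Vh : Xh → ℝ) (h : X → E) (hh : Xh → E) (q : X × Xh) : ℝ :=
  V q.1 + Vh q.2 - ⟪h q.1, hh q.2⟫

theorem closedLoopStorage_closedLoop_add_le
    (hNI : ∀ x u, V (f x u) - V x ≤ ⟪u, h (f x u) - h x⟫)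
    (hOSNI : ∀ xh uh, Vh (fh xh uh) - Vh xh ≤
      ⟪uh, hh (fh xh uh) - hh xh⟫ - ε * ‖hh (fh xh uh) - hh xh‖ ^ 2) (q : X × Xh) :
    closedLoopStorage V Vh h hh (closedLoop f h fh hh q) +
      ε * ‖hh (closedLoop f h fh hh q).2 - hh q.2‖ ^ 2 ≤ closedLoopStorage V Vh h hh q := by
  obtain ⟨a, b⟩ := q
  have hplant := hNI a (hh (fh b (h a)))
  have hctrl := hOSNI b (h a)
  simp only [closedLoopStorage, closedLoop, inner_sub_right] at hplant hctrl ⊢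
  rw [real_inner_comm (h (f _ _)), real_inner_comm (h a)] at hplant
  linarith

theorem closedLoop_output_stationary_of_storage_const (hε : 0 < ε)
    (hNI : ∀ x u, V (f x u) - V x ≤ ⟪u, h (f x u) - h x⟫)
    (hOSNI : ∀ xh uh, Vh (fh xh uh) - Vh xh ≤
      ⟪uh, hh (fh xh uh) - hh xh⟫ - ε * ‖hh (fh xh uh) - hh xh‖ ^ 2) {q : X × Xh}
    (hq : ∀ i, closedLoopStorage V Vh h hh ((closedLoop f h fh hh)^[i] q) =
      closedLoopStorage V Vh h hh q) (i : ℕ) :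
    hh ((closedLoop f h fh hh)^[i + 1] q).2 = hh ((closedLoop f h fh hh)^[i] q).2 := by
  have hdiss := closedLoopStorage_closedLoop_add_le hNI hOSNI ((closedLoop f h fh hh)^[i] q)
  rw [← Function.iterate_succ_apply' (closedLoop f h fh hh), hq, hq,
    add_le_iff_nonpos_right] at hdiss
  have hsq := le_antisymm (nonpos_of_mul_nonpos_right hdiss hε) (sq_nonneg _)
  rwa [sq_eq_zero_iff, norm_eq_zero, sub_eq_zero] at hsq

end ClosedLoop

theorem NI_SAOSNI_asymptotic_stability_general
    (n m p : ℕ)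
    (f : EuclideanSpace ℝ (Fin n) → EuclideanSpace ℝ (Fin p) → EuclideanSpace ℝ (Fin n))
    (h : EuclideanSpace ℝ (Fin n) → EuclideanSpace ℝ (Fin p))
    (fh : EuclideanSpace ℝ (Fin m) → EuclideanSpace ℝ (Fin p) → EuclideanSpace ℝ (Fin m))
    (hh : EuclideanSpace ℝ (Fin m) → EuclideanSpace ℝ (Fin p))
    (hfcont : Continuous fun q : EuclideanSpace ℝ (Fin n) × EuclideanSpace ℝ (Fin p) => f q.1 q.2)
    (hhcont : Continuous h)
    (hfhcont : Continuous fun q : EuclideanSpace ℝ (Fin m) × EuclideanSpace ℝ (Fin p) => fh q.1 q.2)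
    (hhhcont : Continuous hh)
    (V : EuclideanSpace ℝ (Fin n) → ℝ)
    (Vh : EuclideanSpace ℝ (Fin m) → ℝ)
    (ε : ℝ) (hε : 0 < ε)
    -- NI: V continuous positive definite plus dissipation inequality
    (hNI : ∀ (x : EuclideanSpace ℝ (Fin n)) (u : EuclideanSpace ℝ (Fin p)),
      V (f x u) - V x ≤ ⟪u, h (f x u) - h x⟫)
    -- OSNI: V̂ continuous positive definite plus strict dissipation inequality
    (hOSNI : ∀ (xh : EuclideanSpace ℝ (Fin m)) (uh : EuclideanSpace ℝ (Fin p)),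
      Vh (fh xh uh) - Vh xh ≤ ⟪uh, hh (fh xh uh) - hh xh⟫ - ε * ‖hh (fh xh uh) - hh xh‖ ^ 2)
    -- W continuous and positive definite
    (W : EuclideanSpace ℝ (Fin n) → EuclideanSpace ℝ (Fin m) → ℝ)
    (hW : ∀ x' xh', W x' xh' = V x' + Vh xh' - ⟪h x', hh xh'⟫)
    (hWcont : Continuous fun q : EuclideanSpace ℝ (Fin n) × EuclideanSpace ℝ (Fin m) => W q.1 q.2)
    (hW0 : W 0 0 = 0)
    (hWpos : ∀ (x' : EuclideanSpace ℝ (Fin n)) (xh' : EuclideanSpace ℝ (Fin m)),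
      ¬(x' = 0 ∧ xh' = 0) → 0 < W x' xh')
    -- Assumption 1 (closed-loop form): output-stationary closed-loop sequences vanish eventually
    (hAss : ∀ (z : ℕ → EuclideanSpace ℝ (Fin n)) (zh : ℕ → EuclideanSpace ℝ (Fin m)),
      (∀ k, z (k + 1) = f (z k) (hh (fh (zh k) (h (z k))))) →
      (∀ k, zh (k + 1) = fh (zh k) (h (z k))) →
      (∀ k, hh (zh (k + 1)) = hh (zh k)) →
      ∃ K : ℕ, ∀ k ≥ K, z k = 0 ∧ zh k = 0)
    -- a bounded closed-loop trajectory
    (x : ℕ → EuclideanSpace ℝ (Fin n)) (xh : ℕ → EuclideanSpace ℝ (Fin m))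
    (hx : ∀ k, x (k + 1) = f (x k) (hh (fh (xh k) (h (x k)))))
    (hxh : ∀ k, xh (k + 1) = fh (xh k) (h (x k)))
    (hbdd : ∃ R : ℝ, ∀ k, ‖x k‖ ≤ R ∧ ‖xh k‖ ≤ R) :
    Filter.Tendsto x Filter.atTop (nhds 0) ∧ Filter.Tendsto xh Filter.atTop (nhds 0) := by
  obtain ⟨R, hR⟩ := hbdd
  set Φ := closedLoop f h fh hh
  set S := closedLoopStorage V Vh h hh
  have hWS : Function.uncurry W = S := funext fun q => hW q.1 q.2
  have hinv (q) (hq : ∀ i, S (Φ^[i] q) = S q) : ∃ k, Φ^[k] q = 0 := by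
    obtain ⟨K, hK⟩ := hAss (fun i => (Φ^[i] q).1) (fun i => (Φ^[i] q).2)
      (fun i => by rw [Function.iterate_succ_apply']; rfl)
      (fun i => by rw [Function.iterate_succ_apply']; rfl)
      (closedLoop_output_stationary_of_storage_const hε hNI hOSNI hq)
    exact ⟨K, Prod.ext (hK K le_rfl).1 (hK K le_rfl).2⟩
  have hconv : Tendsto (fun k => Φ^[k] (x 0, xh 0)) atTop (𝓝 0) := by
    refine tendsto_iterate_of_lyapunov (continuous_closedLoop hfcont hhcont hfhcont hhhcont)
      (hWS ▸ hWcont) (fun q => ?_) (fun q hq => ?_) hinv (isCompact_closedBall 0 R) (fun k => ?_)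
    · exact (le_add_of_nonneg_right (by positivity)).trans
        (closedLoopStorage_closedLoop_add_le hNI hOSNI q)
    · rw [← hWS]
      exact hW0.trans_lt <| hWpos q.1 q.2 fun hq0 => hq (Prod.ext hq0.1 hq0.2)
    · rw [closedLoop_iterate hx hxh, mem_closedBall_zero_iff, Prod.norm_def]
      exact max_le (hR k).1 (hR k).2
  simp only [Φ, closedLoop_iterate hx hxh] at hconv
  rw [← Prod.mk_zero_zero, nhds_prod_eq] at hconv
  exact tendsto_prod_iff'.1 hconv

/-- Theorem 1: every bounded closed-loop trajectory of an NI plant with an SAOSNI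
controller converges to the origin, under positive definiteness of `W` and the
closed-loop form of Assumption 1. -/
theorem NI_SAOSNI_asymptotic_stability
    (n m p : ℕ)
    (f : EuclideanSpace ℝ (Fin n) → EuclideanSpace ℝ (Fin p) → EuclideanSpace ℝ (Fin n))
    (h : EuclideanSpace ℝ (Fin n) → EuclideanSpace ℝ (Fin p))
    (fh : EuclideanSpace ℝ (Fin m) → EuclideanSpace ℝ (Fin p) → EuclideanSpace ℝ (Fin m))
    (hh : EuclideanSpace ℝ (Fin m) → EuclideanSpace ℝ (Fin p))
    (hfcont : Continuous fun q : EuclideanSpace ℝ (Fin n) × EuclideanSpace ℝ (Fin p) => f q.1 q.2)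
    (hhcont : Continuous h)
    (hfhcont : Continuous fun q : EuclideanSpace ℝ (Fin m) × EuclideanSpace ℝ (Fin p) => fh q.1 q.2)
    (hhhcont : Continuous hh)
    (V : EuclideanSpace ℝ (Fin n) → ℝ)
    (Vh : EuclideanSpace ℝ (Fin m) → ℝ)
    (ε : ℝ) (hε : 0 < ε)
    -- NI: V continuous positive definite plus dissipation inequality
    (hVcont : Continuous V) (hV0 : V 0 = 0) (hVpos : ∀ x : EuclideanSpace ℝ (Fin n), x ≠ 0 → 0 < V x)
    (hNI : ∀ (x : EuclideanSpace ℝ (Fin n)) (u : EuclideanSpace ℝ (Fin p)),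
      V (f x u) - V x ≤ ⟪u, h (f x u) - h x⟫)
    -- OSNI: V̂ continuous positive definite plus strict dissipation inequality
    (hVhcont : Continuous Vh) (hVh0 : Vh 0 = 0)
    (hVhpos : ∀ xh : EuclideanSpace ℝ (Fin m), xh ≠ 0 → 0 < Vh xh)
    (hOSNI : ∀ (xh : EuclideanSpace ℝ (Fin m)) (uh : EuclideanSpace ℝ (Fin p)),
      Vh (fh xh uh) - Vh xh ≤ ⟪uh, hh (fh xh uh) - hh xh⟫ - ε * ‖hh (fh xh uh) - hh xh‖ ^ 2)
    -- W continuous and positive definite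
    (W : EuclideanSpace ℝ (Fin n) → EuclideanSpace ℝ (Fin m) → ℝ)
    (hW : ∀ x' xh', W x' xh' = V x' + Vh xh' - ⟪h x', hh xh'⟫)
    (hWcont : Continuous fun q : EuclideanSpace ℝ (Fin n) × EuclideanSpace ℝ (Fin m) => W q.1 q.2)
    (hW0 : W 0 0 = 0)
    (hWpos : ∀ (x' : EuclideanSpace ℝ (Fin n)) (xh' : EuclideanSpace ℝ (Fin m)),
      ¬(x' = 0 ∧ xh' = 0) → 0 < W x' xh')
    -- Assumption 1 (closed-loop form): output-stationary closed-loop sequences vanish eventually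
    (hAss : ∀ (z : ℕ → EuclideanSpace ℝ (Fin n)) (zh : ℕ → EuclideanSpace ℝ (Fin m)),
      (∀ k, z (k + 1) = f (z k) (hh (fh (zh k) (h (z k))))) →
      (∀ k, zh (k + 1) = fh (zh k) (h (z k))) →
      (∀ k, hh (zh (k + 1)) = hh (zh k)) →
      ∃ K : ℕ, ∀ k ≥ K, z k = 0 ∧ zh k = 0)
    -- a bounded closed-loop trajectory
    (x : ℕ → EuclideanSpace ℝ (Fin n)) (xh : ℕ → EuclideanSpace ℝ (Fin m))
    (hx : ∀ k, x (k + 1) = f (x k) (hh (fh (xh k) (h (x k)))))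
    (hxh : ∀ k, xh (k + 1) = fh (xh k) (h (x k)))
    (hbdd : ∃ R : ℝ, ∀ k, ‖x k‖ ≤ R ∧ ‖xh k‖ ≤ R) :
    Filter.Tendsto x Filter.atTop (nhds 0) ∧ Filter.Tendsto xh Filter.atTop (nhds 0) :=
  NI_SAOSNI_asymptotic_stability_general n m p f h fh hh hfcont hhcont hfhcont hhhcont V Vh ε hε hNI
    hOSNI W hW hWcont hW0 hWpos hAss x xh hx hxh hbdd
end

section
/- Consider an NI system (f, h) with storage function V used as a step-advanced NI (SANI) controller, interconnected with an OSNI system (f̂, ĥ) with storage function V̂ and degree of output strictness ε > 0, via u_k = ĥ(x̂_k) and û_k = h(x_{k+1}) = h(f(x_k, ĥ(x̂_k))). Then along every closed-loop trajectory (x_k, x̂_k), the function W satisfies W(x_{k+1}, x̂_{k+1}) − W(x_k, x̂_k) ≤ −ε ‖ĥ(x̂_{k+1}) − ĥ(x̂_k)‖² ≤ 0 for all k. -/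
open scoped RealInnerProductSpace

/-!
The two supply rates of the interconnection telescope: with `u = ĥ(x̂_k)` and `û = h(x_{k+1})`,
`⟪ĥ(x̂_k), h(x_{k+1}) − h(x_k)⟫ + ⟪h(x_{k+1}), ĥ(x̂_{k+1}) − ĥ(x̂_k)⟫` is exactly the increment of the
cross term `⟪h(x), ĥ(x̂)⟫`. Adding the NI and OSNI dissipation inequalities therefore leaves only
the output-strictness term in the increment of `W`.
-/

theorem inner_sub_add_inner_sub_eq {E : Type*} [NormedAddCommGroup E] [InnerProductSpace ℝ E]
    (a a' b b' : E) : ⟪b, a' - a⟫ + ⟪a', b' - b⟫ = ⟪a', b'⟫ - ⟪a, b⟫ := by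
  rw [inner_sub_right, inner_sub_right, real_inner_comm b a', real_inner_comm b a]
  ring

theorem coupled_storage_sub_le {X Y E : Type*} [NormedAddCommGroup E] [InnerProductSpace ℝ E]
    {V : X → ℝ} {Vh : Y → ℝ} {h : X → E} {hh : Y → E} {ε : ℝ} {x x' : X} {y y' : Y}
    (hNI : V x' - V x ≤ ⟪hh y, h x' - h x⟫)
    (hOSNI : Vh y' - Vh y ≤ ⟪h x', hh y' - hh y⟫ - ε * ‖hh y' - hh y‖ ^ 2) :
    (V x' + Vh y' - ⟪h x', hh y'⟫) - (V x + Vh y - ⟪h x, hh y⟫) ≤ -ε * ‖hh y' - hh y‖ ^ 2 := by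
  have := inner_sub_add_inner_sub_eq (h x) (h x') (hh y) (hh y')
  linarith

theorem SANI_OSNI_W_decrease_general
    (n m p : ℕ)
    (f : EuclideanSpace ℝ (Fin n) → EuclideanSpace ℝ (Fin p) → EuclideanSpace ℝ (Fin n))
    (h : EuclideanSpace ℝ (Fin n) → EuclideanSpace ℝ (Fin p))
    (fh : EuclideanSpace ℝ (Fin m) → EuclideanSpace ℝ (Fin p) → EuclideanSpace ℝ (Fin m))
    (hh : EuclideanSpace ℝ (Fin m) → EuclideanSpace ℝ (Fin p))
    (V : EuclideanSpace ℝ (Fin n) → ℝ)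
    (Vh : EuclideanSpace ℝ (Fin m) → ℝ)
    (ε : ℝ) (hε : 0 < ε)
    -- NI: V continuous positive definite plus dissipation inequality
    (hNI : ∀ (x : EuclideanSpace ℝ (Fin n)) (u : EuclideanSpace ℝ (Fin p)),
      V (f x u) - V x ≤ ⟪u, h (f x u) - h x⟫)
    -- OSNI: V̂ continuous positive definite plus strict dissipation inequality
    (hOSNI : ∀ (xh : EuclideanSpace ℝ (Fin m)) (uh : EuclideanSpace ℝ (Fin p)),
      Vh (fh xh uh) - Vh xh ≤ ⟪uh, hh (fh xh uh) - hh xh⟫ - ε * ‖hh (fh xh uh) - hh xh‖ ^ 2)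
    -- closed-loop trajectory: u_k = ĥ(x̂_k), û_k = h(x_{k+1}) = h(f(x_k, ĥ(x̂_k)))
    (x : ℕ → EuclideanSpace ℝ (Fin n)) (xh : ℕ → EuclideanSpace ℝ (Fin m))
    (hx : ∀ k, x (k + 1) = f (x k) (hh (xh k)))
    (hxh : ∀ k, xh (k + 1) = fh (xh k) (h (f (x k) (hh (xh k)))))
    (W : EuclideanSpace ℝ (Fin n) → EuclideanSpace ℝ (Fin m) → ℝ)
    (hW : ∀ x' xh', W x' xh' = V x' + Vh xh' - ⟪h x', hh xh'⟫) :
    ∀ k, W (x (k + 1)) (xh (k + 1)) - W (x k) (xh k) ≤ -ε * ‖hh (xh (k + 1)) - hh (xh k)‖ ^ 2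
      ∧ -ε * ‖hh (xh (k + 1)) - hh (xh k)‖ ^ 2 ≤ 0 := by
  intro k
  have hxh' : xh (k + 1) = fh (xh k) (h (x (k + 1))) := by rw [hxh k, hx k]
  have hNIstep := hNI (x k) (hh (xh k))
  have hOSNIstep := hOSNI (xh k) (h (x (k + 1)))
  rw [← hx k] at hNIstep
  rw [← hxh'] at hOSNIstep
  refine ⟨?_, ?_⟩
  · rw [hW, hW]
    exact coupled_storage_sub_le hNIstep hOSNIstep
  · exact mul_nonpos_of_nonpos_of_nonneg (neg_nonpos.mpr hε.le) (sq_nonneg _)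

/-- Along every closed-loop trajectory of an SANI controller (an NI system with a
one-step output advance) and an OSNI plant, the function
`W(x,x̂) = V(x) + V̂(x̂) − h(x)ᵀ ĥ(x̂)` satisfies
`W(x_{k+1}, x̂_{k+1}) − W(x_k, x̂_k) ≤ −ε ‖ĥ(x̂_{k+1}) − ĥ(x̂_k)‖² ≤ 0`. -/
theorem SANI_OSNI_W_decrease
    (n m p : ℕ)
    (f : EuclideanSpace ℝ (Fin n) → EuclideanSpace ℝ (Fin p) → EuclideanSpace ℝ (Fin n))
    (h : EuclideanSpace ℝ (Fin n) → EuclideanSpace ℝ (Fin p))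
    (fh : EuclideanSpace ℝ (Fin m) → EuclideanSpace ℝ (Fin p) → EuclideanSpace ℝ (Fin m))
    (hh : EuclideanSpace ℝ (Fin m) → EuclideanSpace ℝ (Fin p))
    (V : EuclideanSpace ℝ (Fin n) → ℝ)
    (Vh : EuclideanSpace ℝ (Fin m) → ℝ)
    (ε : ℝ) (hε : 0 < ε)
    -- NI: V continuous positive definite plus dissipation inequality
    (hVcont : Continuous V) (hV0 : V 0 = 0) (hVpos : ∀ x : EuclideanSpace ℝ (Fin n), x ≠ 0 → 0 < V x)
    (hNI : ∀ (x : EuclideanSpace ℝ (Fin n)) (u : EuclideanSpace ℝ (Fin p)),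
      V (f x u) - V x ≤ ⟪u, h (f x u) - h x⟫)
    -- OSNI: V̂ continuous positive definite plus strict dissipation inequality
    (hVhcont : Continuous Vh) (hVh0 : Vh 0 = 0)
    (hVhpos : ∀ xh : EuclideanSpace ℝ (Fin m), xh ≠ 0 → 0 < Vh xh)
    (hOSNI : ∀ (xh : EuclideanSpace ℝ (Fin m)) (uh : EuclideanSpace ℝ (Fin p)),
      Vh (fh xh uh) - Vh xh ≤ ⟪uh, hh (fh xh uh) - hh xh⟫ - ε * ‖hh (fh xh uh) - hh xh‖ ^ 2)
    -- closed-loop trajectory: u_k = ĥ(x̂_k), û_k = h(x_{k+1}) = h(f(x_k, ĥ(x̂_k)))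
    (x : ℕ → EuclideanSpace ℝ (Fin n)) (xh : ℕ → EuclideanSpace ℝ (Fin m))
    (hx : ∀ k, x (k + 1) = f (x k) (hh (xh k)))
    (hxh : ∀ k, xh (k + 1) = fh (xh k) (h (f (x k) (hh (xh k)))))
    (W : EuclideanSpace ℝ (Fin n) → EuclideanSpace ℝ (Fin m) → ℝ)
    (hW : ∀ x' xh', W x' xh' = V x' + Vh xh' - ⟪h x', hh xh'⟫) :
    ∀ k, W (x (k + 1)) (xh (k + 1)) - W (x k) (xh k) ≤ -ε * ‖hh (xh (k + 1)) - hh (xh k)‖ ^ 2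
      ∧ -ε * ‖hh (xh (k + 1)) - hh (xh k)‖ ^ 2 ≤ 0 :=
  SANI_OSNI_W_decrease_general n m p f h fh hh V Vh ε hε hNI hOSNI x xh hx hxh W hW
end

section
/- (Theorem 3, first part) Let A ∈ ℝ^{n×n}, B ∈ ℝ^{n×p}, C ∈ ℝ^{p×n}, and let P ∈ ℝ^{n×n} be symmetric positive definite. The linear discrete-time system x_{k+1} = Ax_k + Bu_k, y_k = Cx_k is NI with quadratic storage function V(x) = ½ xᵀPx — that is, the inequality ½ (Ax + Bu)ᵀ P (Ax + Bu) − ½ xᵀPx ≤ uᵀ (C(Ax + Bu) − Cx) holds for all x ∈ ℝ^n and u ∈ ℝ^p — if and only if the matrix M is positive semidefinite. -/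
/-!
Writing `z = (x, u)`, the quadratic form of `M` splits into three pieces,
`M = Eᵀ P E - Gᵀ P G + (S + Sᵀ)` with `E z = x`, `G z = A x + B u` and
`zᵀ S z = uᵀ C ((A - 1) x + B u)`. Hence `zᵀ M z` is exactly twice the supply rate minus twice the
increase of the storage `½ xᵀ P x`, so the dissipation inequality for all `(x, u)` is nonnegativity
of the quadratic form of `M`. Symmetry of `P` makes `M` symmetric, which is the remaining
condition for positive semidefiniteness.
-/

open Matrix

theorem forall_sumElim {α β γ : Type*} {q : (α ⊕ β → γ) → Prop} :
    (∀ z, q z) ↔ ∀ x u, q (Sum.elim x u) :=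
  ⟨fun h _ _ => h _, fun h z => Sum.elim_comp_inl_inr z ▸ h _ _⟩

theorem Matrix.IsSymm.transpose_mul_mul {ι κ R : Type*} [Fintype κ] [CommSemiring R]
    {P : Matrix κ κ R} (hP : P.IsSymm) (L : Matrix κ ι R) : (Lᵀ * P * L).IsSymm := by
  simp only [IsSymm, transpose_mul, transpose_transpose, hP.eq, Matrix.mul_assoc]

section QuadraticForm

variable {ι κ ν R : Type*} [Fintype ι] [Fintype κ] [Fintype ν] [CommSemiring R]

theorem dotProduct_transpose_mul_mul_mulVec (L : Matrix κ ι R) (Q : Matrix κ ν R)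
    (K : Matrix ν ι R) (z : ι → R) :
    z ⬝ᵥ ((Lᵀ * Q * K) *ᵥ z) = (L *ᵥ z) ⬝ᵥ (Q *ᵥ (K *ᵥ z)) := by
  rw [← mulVec_mulVec, ← mulVec_mulVec, dotProduct_mulVec, vecMul_transpose]

theorem dotProduct_add_transpose_mulVec (S : Matrix ι ι R) (z : ι → R) :
    z ⬝ᵥ ((S + Sᵀ) *ᵥ z) = 2 * (z ⬝ᵥ (S *ᵥ z)) := by
  rw [add_mulVec, dotProduct_add, dotProduct_mulVec z Sᵀ, vecMul_transpose, dotProduct_comm,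
    two_mul]

end QuadraticForm

namespace NI

variable {m p R : Type*} [Fintype m] [Fintype p] [DecidableEq m] [CommRing R]
  (A : Matrix m m R) (B : Matrix m p R) (C : Matrix p m R) (P : Matrix m m R)

def lmiMatrix : Matrix (m ⊕ p) (m ⊕ p) R :=
  fromBlocks (P - Aᵀ * P * A) ((Aᵀ - 1) * Cᵀ - Aᵀ * P * B)
    (C * (A - 1) - Bᵀ * P * A) (C * B + Bᵀ * Cᵀ - Bᵀ * P * B)

def supplyMatrix [DecidableEq p] : Matrix (m ⊕ p) (m ⊕ p) R :=
  (fromCols 0 1 : Matrix p (m ⊕ p) R)ᵀ * C * fromCols (A - 1) B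

theorem lmiMatrix_eq [DecidableEq p] :
    lmiMatrix A B C P =
      (fromCols 1 0 : Matrix m (m ⊕ p) R)ᵀ * P * (fromCols 1 0 : Matrix m (m ⊕ p) R)
        - (fromCols A B)ᵀ * P * fromCols A B
        + (supplyMatrix A B C + (supplyMatrix A B C)ᵀ) := by
  simp only [lmiMatrix, supplyMatrix, Matrix.mul_assoc, transpose_fromCols, mul_fromCols,
    fromRows_mul, fromCols_fromRows_eq_fromBlocks]
  simp only [fromBlocks_transpose, transpose_one, transpose_zero, transpose_mul, transpose_add,
    transpose_neg, Matrix.one_mul, Matrix.zero_mul, Matrix.mul_one, Matrix.mul_zero, sub_eq_add_neg,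
    fromBlocks_neg, fromBlocks_add]
  congr 1 <;> abel

theorem lmiMatrix_isSymm (hP : P.IsSymm) : (lmiMatrix A B C P).IsSymm := by
  classical
  rw [lmiMatrix_eq]
  exact ((hP.transpose_mul_mul _).sub (hP.transpose_mul_mul _)).add (isSymm_add_transpose_self _)

theorem sumElim_dotProduct_lmiMatrix_mulVec (x : m → R) (u : p → R) :
    Sum.elim x u ⬝ᵥ (lmiMatrix A B C P *ᵥ Sum.elim x u)
      = 2 * (u ⬝ᵥ (C *ᵥ (A *ᵥ x + B *ᵥ u) - C *ᵥ x))
        - ((A *ᵥ x + B *ᵥ u) ⬝ᵥ (P *ᵥ (A *ᵥ x + B *ᵥ u)) - x ⬝ᵥ (P *ᵥ x)) := by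
  classical
  rw [lmiMatrix_eq, add_mulVec, sub_mulVec, dotProduct_add, dotProduct_sub,
    dotProduct_add_transpose_mulVec, supplyMatrix]
  simp only [dotProduct_transpose_mul_mul_mulVec, fromCols_mulVec_sumElim, one_mulVec, zero_mulVec,
    add_zero, zero_add, sub_mulVec, sub_add_eq_add_sub, mulVec_sub]
  ring

end NI

/-- Theorem 3 (first part): the linear discrete-time system `x⁺ = Ax + Bu`, `y = Cx`
is NI with quadratic storage function `V(x) = ½ xᵀPx` (with `P` symmetric positive
definite) if and only if the block matrix `M` is positive semidefinite. -/
theorem linear_NI_iff_M_psd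
    (n p : ℕ)
    (A : Matrix (Fin n) (Fin n) ℝ) (B : Matrix (Fin n) (Fin p) ℝ)
    (C : Matrix (Fin p) (Fin n) ℝ) (P : Matrix (Fin n) (Fin n) ℝ)
    (hP : P.PosDef)
    (M : Matrix (Fin n ⊕ Fin p) (Fin n ⊕ Fin p) ℝ)
    (hM : M = Matrix.fromBlocks
      (P - Aᵀ * P * A) ((Aᵀ - 1) * Cᵀ - Aᵀ * P * B)
      (C * (A - 1) - Bᵀ * P * A) (C * B + Bᵀ * Cᵀ - Bᵀ * P * B)) :
    (∀ (x : Fin n → ℝ) (u : Fin p → ℝ),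
      (1 / 2 : ℝ) * ((A *ᵥ x + B *ᵥ u) ⬝ᵥ (P *ᵥ (A *ᵥ x + B *ᵥ u)))
        - (1 / 2 : ℝ) * (x ⬝ᵥ (P *ᵥ x))
        ≤ u ⬝ᵥ (C *ᵥ (A *ᵥ x + B *ᵥ u) - C *ᵥ x))
    ↔ M.PosSemidef := by
  obtain rfl : M = NI.lmiMatrix A B C P := hM
  have hM_symm := NI.lmiMatrix_isSymm A B C P (isHermitian_iff_isSymm.mp hP.isHermitian)
  rw [posSemidef_iff_dotProduct_mulVec, and_iff_right (isHermitian_iff_isSymm.mpr hM_symm),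
    forall_sumElim]
  refine forall₂_congr fun x u => ?_
  rw [star_trivial, NI.sumElim_dotProduct_lmiMatrix_mulVec]
  constructor <;> intro h <;> linarith
end

section
/- (Theorem 3, second part) Let A ∈ ℝ^{n×n}, B ∈ ℝ^{n×p}, C ∈ ℝ^{p×n}, let P ∈ ℝ^{n×n} be symmetric, and suppose I − A is invertible (det(I − A) ≠ 0). Then the matrix M is positive semidefinite if and only if both of the following hold: (i) C = Bᵀ ((I − A)⁻¹)ᵀ P, and (ii) P − AᵀPA is positive semidefinite. -/
/-!
With `J = 1 - A` invertible and `Z = J⁻¹ B`, the congruence by the unipotent block matrix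
`S = [[1, Z], [0, 1]]` turns `M` into `[[P - AᵀPA, JᵀW], [WᵀJ, 0]]` with `W = P Z - Cᵀ`.
A positive semidefinite matrix with a zero diagonal block has zero off-diagonal blocks, so
`M ≥ 0` exactly when `W = 0`, i.e. `C = Bᵀ J⁻ᵀ P`, and `P - AᵀPA ≥ 0`.
-/

open Matrix
open scoped ComplexOrder

namespace Matrix

section

variable {m n 𝕜 : Type*} [Fintype m] [Fintype n] [RCLike 𝕜]

theorem posSemidef_fromBlocks_zero₂₂_iff {D : Matrix m m 𝕜} {X : Matrix m n 𝕜} :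
    (fromBlocks D X Xᴴ 0).PosSemidef ↔ X = 0 ∧ D.PosSemidef := by
  constructor
  · intro h
    refine ⟨ext_iff_mulVec.mpr fun u ↦ funext fun i ↦ ?_, h.submatrix Sum.inl⟩
    have hu := (h.dotProduct_mulVec_zero_iff (Sum.elim 0 u)).mp <| by
      simp [fromBlocks_mulVec, Function.star_sumElim, sumElim_dotProduct_sumElim]
    simpa [fromBlocks_mulVec] using congrFun hu (Sum.inl i)
  · classical
    rintro ⟨rfl, hD⟩
    have := hD.conjTranspose_mul_mul_same (fromCols (1 : Matrix m m 𝕜) (0 : Matrix m n 𝕜))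
    rw [conjTranspose_fromCols_eq_fromRows_conjTranspose, fromRows_mul, fromRows_mul_fromCols]
      at this
    simpa using this

end

section

variable {n p R : Type*} [Fintype n] [Fintype p] [DecidableEq n] [DecidableEq p] [CommRing R]

def lyapunovBlockMatrix (A : Matrix n n R) (B : Matrix n p R) (C : Matrix p n R)
    (P : Matrix n n R) : Matrix (n ⊕ p) (n ⊕ p) R :=
  fromBlocks (P - Aᵀ * P * A) ((Aᵀ - 1) * Cᵀ - Aᵀ * P * B)
    (C * (A - 1) - Bᵀ * P * A) (C * B + Bᵀ * Cᵀ - Bᵀ * P * B)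

theorem transpose_mul_lyapunovBlockMatrix_mul_eq (A P : Matrix n n R) (B Z : Matrix n p R)
    (C : Matrix p n R) (hP : Pᵀ = P) (hZ : (1 - A) * Z = B) :
    (fromBlocks 1 Z 0 1)ᵀ * lyapunovBlockMatrix A B C P * fromBlocks 1 Z 0 1 =
      fromBlocks (P - Aᵀ * P * A) ((1 - A)ᵀ * (P * Z - Cᵀ)) ((1 - A)ᵀ * (P * Z - Cᵀ))ᵀ 0 := by
  subst hZ
  simp only [lyapunovBlockMatrix, fromBlocks_transpose, fromBlocks_multiply, transpose_one,
    transpose_zero, transpose_sub, transpose_mul, transpose_transpose, hP, Matrix.mul_sub,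
    Matrix.sub_mul, Matrix.mul_add, Matrix.add_mul, Matrix.mul_one, Matrix.one_mul,
    Matrix.mul_zero, Matrix.zero_mul, Matrix.mul_assoc, add_zero]
  congr 1 <;> abel

end

end Matrix

/-- Theorem 3 (second part): when `I − A` is invertible, `M ≥ 0` holds if and only if
`C = Bᵀ (I − A)⁻ᵀ P` and `P − AᵀPA ≥ 0`. -/
theorem M_psd_iff_C_eq_and_lyapunov
    (n p : ℕ)
    (A : Matrix (Fin n) (Fin n) ℝ) (B : Matrix (Fin n) (Fin p) ℝ)
    (C : Matrix (Fin p) (Fin n) ℝ) (P : Matrix (Fin n) (Fin n) ℝ)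
    (hP : P.IsSymm)
    (hA : ((1 : Matrix (Fin n) (Fin n) ℝ) - A).det ≠ 0)
    (M : Matrix (Fin n ⊕ Fin p) (Fin n ⊕ Fin p) ℝ)
    (hM : M = Matrix.fromBlocks
      (P - Aᵀ * P * A) ((Aᵀ - 1) * Cᵀ - Aᵀ * P * B)
      (C * (A - 1) - Bᵀ * P * A) (C * B + Bᵀ * Cᵀ - Bᵀ * P * B)) :
    M.PosSemidef ↔ (C = Bᵀ * ((1 - A)⁻¹)ᵀ * P ∧ (P - Aᵀ * P * A).PosSemidef) := by
  have hJ : IsUnit (1 - A).det := isUnit_iff_ne_zero.mpr hA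
  set Z := (1 - A)⁻¹ * B
  have hS : IsUnit (fromBlocks 1 Z 0 1 : Matrix (Fin n ⊕ Fin p) (Fin n ⊕ Fin p) ℝ) :=
    isUnit_fromBlocks_zero₂₁.mpr ⟨isUnit_one, isUnit_one⟩
  have hC : (1 - A)ᵀ * (P * Z - Cᵀ) = 0 ↔ C = Bᵀ * ((1 - A)⁻¹)ᵀ * P := by
    let := invertibleOfIsUnitDet _ (det_transpose (1 - A) ▸ hJ)
    have hZt : Bᵀ * ((1 - A)⁻¹)ᵀ * P = (P * Z)ᵀ := by
      rw [transpose_mul, transpose_mul, hP.eq]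
    rw [(mul_right_injective_of_invertible _).eq_iff' (Matrix.mul_zero _), sub_eq_zero, hZt,
      eq_comm, ← transpose_inj, transpose_transpose]
  rw [show M = lyapunovBlockMatrix A B C P from hM, ← hS.posSemidef_star_left_conjugate_iff,
    star_eq_conjTranspose, conjTranspose_eq_transpose_of_trivial,
    transpose_mul_lyapunovBlockMatrix_mul_eq A P B Z C hP (mul_nonsing_inv_cancel_left _ B hJ),
    ← conjTranspose_eq_transpose_of_trivial ((1 - A)ᵀ * (P * Z - Cᵀ)),
    posSemidef_fromBlocks_zero₂₂_iff, hC]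
end

section
/- Let A ∈ ℝ^{n×n}, B ∈ ℝ^{n×p}, C ∈ ℝ^{p×n}, let P ∈ ℝ^{n×n} be symmetric, suppose I − A is invertible, and suppose M is positive semidefinite. Then M F = 0, where F ∈ ℝ^{(n+p)×p} is the block column matrix F = [(I − A)⁻¹ B; I]. -/
/-!
Write `B = (I − A) X` with `X = (I − A)⁻¹ B`. Substituting this into the quadratic form
`Fᵀ M F` makes every term cancel, so `Fᵀ M F = 0`; for a positive semidefinite `M = Rᴴ R`
this says `(R F)ᴴ (R F) = 0`, hence `R F = 0` and `M F = 0`.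
-/

open Matrix
open scoped ComplexOrder

namespace Matrix

theorem PosSemidef.conjTranspose_mul_mul_eq_zero_iff {𝕜 n m : Type*} [RCLike 𝕜] [Fintype n]
    [Fintype m] {M : Matrix n n 𝕜} (hM : M.PosSemidef) (F : Matrix n m 𝕜) :
    Fᴴ * M * F = 0 ↔ M * F = 0 := by
  classical
  open scoped MatrixOrder in
  obtain ⟨R, rfl⟩ := CStarAlgebra.nonneg_iff_eq_star_mul_self.mp hM.nonneg
  rw [star_eq_conjTranspose, Matrix.mul_assoc, Matrix.mul_assoc, ← Matrix.mul_assoc Fᴴ,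
    ← conjTranspose_mul, conjTranspose_mul_self_eq_zero, ← Matrix.mul_assoc,
    conjTranspose_mul_self_mul_eq_zero]

theorem transpose_fromRows_mul_fromBlocks_mul_fromRows_eq_zero {R m k : Type*} [CommRing R]
    [Fintype m] [Fintype k] [DecidableEq m] [DecidableEq k]
    {A P : Matrix m m R} {B X : Matrix m k R} (C : Matrix k m R) (hX : (1 - A) * X = B) :
    (fromRows X (1 : Matrix k k R))ᵀ * fromBlocks
      (P - Aᵀ * P * A) ((Aᵀ - 1) * Cᵀ - Aᵀ * P * B)
      (C * (A - 1) - Bᵀ * P * A) (C * B + Bᵀ * Cᵀ - Bᵀ * P * B) *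
      fromRows X (1 : Matrix k k R) = 0 := by
  subst hX
  rw [transpose_fromRows, fromCols_mul_fromBlocks, fromCols_mul_fromRows]
  simp only [transpose_sub, transpose_mul, transpose_one, Matrix.sub_mul, Matrix.mul_sub,
    Matrix.add_mul, Matrix.mul_add, Matrix.mul_one, Matrix.one_mul, Matrix.mul_assoc]
  abel

end Matrix

theorem M_psd_annihilates_F_general
    (n p : ℕ)
    (A : Matrix (Fin n) (Fin n) ℝ) (B : Matrix (Fin n) (Fin p) ℝ)
    (C : Matrix (Fin p) (Fin n) ℝ) (P : Matrix (Fin n) (Fin n) ℝ)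
    (hA : ((1 : Matrix (Fin n) (Fin n) ℝ) - A).det ≠ 0)
    (M : Matrix (Fin n ⊕ Fin p) (Fin n ⊕ Fin p) ℝ)
    (hM : M = Matrix.fromBlocks
      (P - Aᵀ * P * A) ((Aᵀ - 1) * Cᵀ - Aᵀ * P * B)
      (C * (A - 1) - Bᵀ * P * A) (C * B + Bᵀ * Cᵀ - Bᵀ * P * B))
    (hMpsd : M.PosSemidef)
    (F : Matrix (Fin n ⊕ Fin p) (Fin p) ℝ)
    (hF : F = Matrix.fromRows ((1 - A)⁻¹ * B) (1 : Matrix (Fin p) (Fin p) ℝ)) :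
    M * F = 0 := by
  have hX : (1 - A) * ((1 - A)⁻¹ * B) = B :=
    mul_nonsing_inv_cancel_left _ _ (isUnit_iff_ne_zero.mpr hA)
  rw [← hMpsd.conjTranspose_mul_mul_eq_zero_iff, conjTranspose_eq_transpose_of_trivial, hM, hF]
  exact transpose_fromRows_mul_fromBlocks_mul_fromRows_eq_zero C hX

/-- If `I − A` is invertible and `M` is positive semidefinite, then `M F = 0` where
`F = [(I − A)⁻¹ B; I]`. -/
theorem M_psd_annihilates_F
    (n p : ℕ)
    (A : Matrix (Fin n) (Fin n) ℝ) (B : Matrix (Fin n) (Fin p) ℝ)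
    (C : Matrix (Fin p) (Fin n) ℝ) (P : Matrix (Fin n) (Fin n) ℝ)
    (hP : P.IsSymm)
    (hA : ((1 : Matrix (Fin n) (Fin n) ℝ) - A).det ≠ 0)
    (M : Matrix (Fin n ⊕ Fin p) (Fin n ⊕ Fin p) ℝ)
    (hM : M = Matrix.fromBlocks
      (P - Aᵀ * P * A) ((Aᵀ - 1) * Cᵀ - Aᵀ * P * B)
      (C * (A - 1) - Bᵀ * P * A) (C * B + Bᵀ * Cᵀ - Bᵀ * P * B))
    (hMpsd : M.PosSemidef)
    (F : Matrix (Fin n ⊕ Fin p) (Fin p) ℝ)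
    (hF : F = Matrix.fromRows ((1 - A)⁻¹ * B) (1 : Matrix (Fin p) (Fin p) ℝ)) :
    M * F = 0 :=
  M_psd_annihilates_F_general n p A B C P hA M hM hMpsd F hF
end

section
/- Let A ∈ ℝ^{n×n}, B ∈ ℝ^{n×p}, C ∈ ℝ^{p×n}, let P ∈ ℝ^{n×n} be symmetric, suppose I − A is invertible, and suppose C = Bᵀ ((I − A)⁻¹)ᵀ P. Then the matrix M admits the factorization M = Gᵀ (P − AᵀPA) G, where G ∈ ℝ^{n×(n+p)} is the block row matrix G = [−I, (I − A)⁻¹ B]. In particular, if in addition P − AᵀPA is positive semidefinite, then M is positive semidefinite. -/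
open Matrix

/-!
Write `K = (I − A)⁻¹ B`, so that `C = Kᵀ P` and `A K = K − B`. Then every block of `M` is a
quadratic expression in `K` and `B` which, after trading `A K` for `K − B`, is the corresponding
block of `Gᵀ (P − AᵀPA) G` with `G = [−I, K]`. Positive semidefiniteness of `Gᵀ S G` for `S ≥ 0`
is then the congruence invariance of the semidefinite cone.
-/

theorem transpose_fromCols_mul_mul_fromCols {R m n k : Type*} [CommRing R] [Fintype m]
    (S : Matrix m m R) (X : Matrix m k R) (Y : Matrix m n R) :
    (fromCols X Y)ᵀ * S * fromCols X Y =
      fromBlocks (Xᵀ * S * X) (Xᵀ * S * Y) (Yᵀ * S * X) (Yᵀ * S * Y) := by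
  rw [transpose_fromCols, fromRows_mul, fromRows_mul_fromCols]

section

variable {R m n : Type*} [CommRing R] [Fintype m] [DecidableEq m]

def steinBlockMatrix (A P : Matrix m m R) (B : Matrix m n R) (C : Matrix n m R) :
    Matrix (m ⊕ n) (m ⊕ n) R :=
  fromBlocks (P - Aᵀ * P * A) ((Aᵀ - 1) * Cᵀ - Aᵀ * P * B)
    (C * (A - 1) - Bᵀ * P * A) (C * B + Bᵀ * Cᵀ - Bᵀ * P * B)

theorem steinBlockMatrix_eq_transpose_mul_mul {A P : Matrix m m R} {K : Matrix m n R}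
    (hP : P.IsSymm) :
    steinBlockMatrix A P ((1 - A) * K) (Kᵀ * P) =
      (fromCols (-1) K)ᵀ * (P - Aᵀ * P * A) * fromCols (-1) K := by
  have hP' : Pᵀ = P := hP
  rw [transpose_fromCols_mul_mul_fromCols, steinBlockMatrix]
  congr 1 <;>
  · simp only [transpose_mul, transpose_sub, transpose_neg, transpose_one, transpose_transpose,
      hP', Matrix.neg_mul, Matrix.mul_neg, Matrix.one_mul, Matrix.mul_one, Matrix.sub_mul,
      Matrix.mul_sub, Matrix.mul_assoc]
    abel

end

/-- If `I − A` is invertible and `C = Bᵀ (I − A)⁻ᵀ P`, then `M = Gᵀ (P − AᵀPA) G`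
with `G = [−I, (I − A)⁻¹ B]`; in particular, `P − AᵀPA ≥ 0` implies `M ≥ 0`. -/
theorem M_factorization
    (n p : ℕ)
    (A : Matrix (Fin n) (Fin n) ℝ) (B : Matrix (Fin n) (Fin p) ℝ)
    (C : Matrix (Fin p) (Fin n) ℝ) (P : Matrix (Fin n) (Fin n) ℝ)
    (hP : P.IsSymm)
    (hA : ((1 : Matrix (Fin n) (Fin n) ℝ) - A).det ≠ 0)
    (hC : C = Bᵀ * ((1 - A)⁻¹)ᵀ * P)
    (M : Matrix (Fin n ⊕ Fin p) (Fin n ⊕ Fin p) ℝ)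
    (hM : M = Matrix.fromBlocks
      (P - Aᵀ * P * A) ((Aᵀ - 1) * Cᵀ - Aᵀ * P * B)
      (C * (A - 1) - Bᵀ * P * A) (C * B + Bᵀ * Cᵀ - Bᵀ * P * B))
    (G : Matrix (Fin n) (Fin n ⊕ Fin p) ℝ)
    (hG : G = Matrix.fromCols (-1 : Matrix (Fin n) (Fin n) ℝ) ((1 - A)⁻¹ * B)) :
    M = Gᵀ * (P - Aᵀ * P * A) * G
    ∧ ((P - Aᵀ * P * A).PosSemidef → M.PosSemidef) := by
  set K := (1 - A)⁻¹ * B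
  have hB : (1 - A) * K = B := mul_nonsing_inv_cancel_left _ _ (isUnit_iff_ne_zero.mpr hA)
  have hC' : C = Kᵀ * P := by rw [hC, transpose_mul]
  have hfact : M = Gᵀ * (P - Aᵀ * P * A) * G := by
    rw [hM, hG, ← steinBlockMatrix_eq_transpose_mul_mul hP, hB, ← hC']
    rfl
  refine ⟨hfact, fun hS => ?_⟩
  simpa [hfact] using hS.conjTranspose_mul_mul_same G
end

section
/- Let A ∈ ℂ^{n×n}, B ∈ ℂ^{n×p}, C ∈ ℂ^{p×n}, let z₀ ∈ ℂ with z₀ ≠ 0, and suppose that (z − z₀) G(z) converges to a matrix R as z → z₀ along the punctured neighborhood of z₀ restricted to points z for which zI − A is invertible. Then (1/z₀)(z − z₀) Ǧ(z) converges to (1 + 1/z₀) R along the same filter; that is, the normalized residue of Ǧ at z₀ equals (1 + 1/z₀) times the residue of G at z₀. -/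
open Matrix Filter Topology

/-!
Where `zI − A` is invertible, `A (zI − A)⁻¹ = z (zI − A)⁻¹ − I`, so `Ǧ(z) = (z + 1) G(z) − CB`.
Multiplying by `z − z₀`, the constant `CB` contributes nothing in the limit and the factor
`z + 1` tends to `z₀ + 1`; dividing by `z₀` gives `1 + 1/z₀`.
-/

section Resolvent

variable {ι m K : Type*} [Fintype ι] [DecidableEq ι] [CommRing K]

theorem Matrix.mul_inv_smul_one_sub {A : Matrix ι ι K} {z : K} (h : IsUnit (z • 1 - A)) :
    A * (z • 1 - A)⁻¹ = z • (z • 1 - A)⁻¹ - 1 := by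
  have hinv : (z • 1 - A) * (z • 1 - A)⁻¹ = 1 :=
    mul_nonsing_inv _ ((isUnit_iff_isUnit_det _).mp h)
  calc A * (z • 1 - A)⁻¹ = (z • 1 - (z • 1 - A)) * (z • 1 - A)⁻¹ := by rw [sub_sub_cancel]
    _ = z • (z • 1 - A)⁻¹ - 1 := by rw [Matrix.sub_mul, hinv, smul_mul, Matrix.one_mul]

theorem Matrix.mul_add_one_mul_inv_smul_one_sub_mul {A : Matrix ι ι K} {B : Matrix ι m K}
    {C : Matrix m ι K} {z : K} (h : IsUnit (z • 1 - A)) :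
    C * (A + 1) * (z • 1 - A)⁻¹ * B = (z + 1) • (C * (z • 1 - A)⁻¹ * B) - C * B := by
  rw [Matrix.mul_assoc C, Matrix.add_mul, Matrix.mul_inv_smul_one_sub h, Matrix.one_mul,
    add_smul, one_smul]
  simp only [Matrix.mul_add, Matrix.mul_sub, Matrix.add_mul, Matrix.sub_mul, Matrix.mul_one,
    Matrix.mul_smul, Matrix.smul_mul]
  abel

end Resolvent

theorem Filter.Tendsto.sub_smul_add_one_smul_sub {K E : Type*} [CommRing K] [TopologicalSpace K]
    [IsTopologicalRing K] [AddCommGroup E] [TopologicalSpace E] [IsTopologicalAddGroup E]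
    [Module K E] [ContinuousSMul K E] {l : Filter K} {z₀ : K} (hl : l ≤ 𝓝 z₀) {F : K → E}
    {R : E} (hR : Tendsto (fun z => (z - z₀) • F z) l (𝓝 R)) (c : E) :
    Tendsto (fun z => (z - z₀) • ((z + 1) • F z - c)) l (𝓝 ((z₀ + 1) • R)) := by
  have hz : Tendsto (fun z : K => z) l (𝓝 z₀) := tendsto_id.mono_left hl
  have hmain : Tendsto (fun z => (z + 1) • ((z - z₀) • F z)) l (𝓝 ((z₀ + 1) • R)) :=
    (hz.add_const 1).smul hR
  have hconst : Tendsto (fun z => (z - z₀) • c) l (𝓝 0) := by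
    simpa using (hz.sub_const z₀).smul_const c
  convert hmain.sub hconst using 1
  · ext z
    rw [smul_sub, smul_smul, smul_smul, mul_comm]
  · rw [sub_zero]

/-- Residue transformation: if `(z − z₀) G(z) → R` as `z → z₀` (through points where
`zI − A` is invertible), then the normalized residue of `Ǧ` at `z₀ ≠ 0` is
`(1 + 1/z₀) R`, i.e. `(1/z₀)(z − z₀) Ǧ(z) → (1 + 1/z₀) R` along the same filter. -/
theorem normalized_residue_transformation
    (n p : ℕ)
    (A : Matrix (Fin n) (Fin n) ℂ) (B : Matrix (Fin n) (Fin p) ℂ)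
    (C : Matrix (Fin p) (Fin n) ℂ)
    (G Gc : ℂ → Matrix (Fin p) (Fin p) ℂ)
    (hG : ∀ z : ℂ, G z = C * (z • (1 : Matrix (Fin n) (Fin n) ℂ) - A)⁻¹ * B)
    (hGc : ∀ z : ℂ, Gc z = C * (A + 1) * (z • (1 : Matrix (Fin n) (Fin n) ℂ) - A)⁻¹ * B)
    (z₀ : ℂ) (hz₀ : z₀ ≠ 0)
    (R : Matrix (Fin p) (Fin p) ℂ)
    (l : Filter ℂ)
    (hl : l = 𝓝[≠] z₀ ⊓ Filter.principal {z : ℂ | IsUnit (z • (1 : Matrix (Fin n) (Fin n) ℂ) - A)})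
    (hR : Filter.Tendsto (fun z : ℂ => (z - z₀) • G z) l (𝓝 R)) :
    Filter.Tendsto (fun z : ℂ => (1 / z₀) • ((z - z₀) • Gc z)) l (𝓝 ((1 + 1 / z₀) • R)) := by
  have hl_nhds : l ≤ 𝓝 z₀ := hl ▸ inf_le_left.trans nhdsWithin_le_nhds
  have hunit : ∀ᶠ z in l, IsUnit (z • (1 : Matrix (Fin n) (Fin n) ℂ) - A) :=
    hl ▸ mem_inf_of_right (mem_principal_self _)
  have hGc_eq : (fun z => (z - z₀) • ((z + 1) • G z - C * B)) =ᶠ[l]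
      fun z => (z - z₀) • Gc z := by
    filter_upwards [hunit] with z hz
    rw [hGc, hG, Matrix.mul_add_one_mul_inv_smul_one_sub_mul hz]
  convert ((hR.sub_smul_add_one_smul_sub hl_nhds (C * B)).congr' hGc_eq).const_smul (1 / z₀)
    using 2
  rw [smul_smul]
  field_simp
end

section
/- (Lyapunov matrix positivity in Corollary 1) Let P ∈ ℝ^{n×n} and P̃ ∈ ℝ^{m×m} be symmetric positive definite, and let C₁ ∈ ℝ^{p×n}, Ĉ₂ ∈ ℝ^{p×m}. Suppose every real eigenvalue μ of the p×p matrix C₁ P⁻¹ C₁ᵀ Ĉ₂ P̃⁻¹ Ĉ₂ᵀ satisfies μ < 1 (the DC loop-gain condition λ_max(G(1)H(1)) < 1). Then the (n+m)×(n+m) block matrix [[P, −C₁ᵀ Ĉ₂], [−Ĉ₂ᵀ C₁, P̃]] is positive definite; equivalently, the quadratic form W(x, x̃) = xᵀPx + x̃ᵀP̃x̃ − 2 xᵀ C₁ᵀ Ĉ₂ x̃ is positive definite. -/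
/-!
By the Schur complement, the block matrix is positive definite iff `P̃ - N` is, where
`N = Ĉ₂ᵀ (C₁ P⁻¹ C₁ᵀ) Ĉ₂`. With `R = √P̃` we have `P̃ - N = R (1 - K) R` for the symmetric
`K = R⁻¹ N R⁻¹ = R (P̃⁻¹ N) R⁻¹`, so it suffices that every eigenvalue of `P̃⁻¹ N` is `< 1`.
Since `X Y` and `Y X` have the same nonzero eigenvalues, the nonzero eigenvalues of
`P̃⁻¹ N = (P̃⁻¹ Ĉ₂ᵀ) (C₁ P⁻¹ C₁ᵀ Ĉ₂)` are those of the loop-gain matrix.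
-/

open Matrix

namespace Matrix

open scoped ComplexOrder MatrixOrder

theorem mem_spectrum_mul_comm_of_ne_zero {K l o : Type*} [Field K] [Fintype l] [Fintype o]
    [DecidableEq l] [DecidableEq o] (A : Matrix l o K) (B : Matrix o l K) {μ : K} (hμ : μ ≠ 0) :
    μ ∈ spectrum K (A * B) ↔ μ ∈ spectrum K (B * A) := by
  have h := congrArg (Polynomial.eval μ) (charpoly_mul_comm' A B)
  simp only [Polynomial.eval_mul, Polynomial.eval_pow, Polynomial.eval_X] at h
  rw [mem_spectrum_iff_isRoot_charpoly, mem_spectrum_iff_isRoot_charpoly, Polynomial.IsRoot.def,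
    Polynomial.IsRoot.def, ← mul_right_inj' (pow_ne_zero (Fintype.card o) hμ), h, mul_zero,
    mul_eq_zero_iff_left (pow_ne_zero _ hμ)]

theorem sumElim_dotProduct_fromBlocks_transpose_mulVec {m n R : Type*} [Fintype m] [Fintype n]
    [CommSemiring R] (A : Matrix m m R) (B : Matrix m n R) (D : Matrix n n R) (x : m → R)
    (y : n → R) :
    Sum.elim x y ⬝ᵥ (fromBlocks A B Bᵀ D *ᵥ Sum.elim x y) =
      x ⬝ᵥ (A *ᵥ x) + y ⬝ᵥ (D *ᵥ y) + 2 * (x ⬝ᵥ (B *ᵥ y)) := by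
  rw [fromBlocks_mulVec, sumElim_dotProduct_sumElim, Sum.elim_comp_inl, Sum.elim_comp_inr,
    dotProduct_add, dotProduct_add, mulVec_transpose, dotProduct_comm y, ← dotProduct_mulVec]
  ring

variable {𝕜 m n : Type*} [RCLike 𝕜] [Fintype m] [Fintype n] [DecidableEq m] [DecidableEq n]

theorem PosDef.posDef_fromBlocks₁₁_iff {A : Matrix m m 𝕜} (B : Matrix m n 𝕜) (D : Matrix n n 𝕜)
    (hA : A.PosDef) : (fromBlocks A B Bᴴ D).PosDef ↔ (D - Bᴴ * A⁻¹ * B).PosDef := by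
  let := hA.isUnit.invertible
  have hdet : (fromBlocks A B Bᴴ D).det = A.det * (D - Bᴴ * A⁻¹ * B).det := by
    rw [det_fromBlocks₁₁, invOf_eq_nonsing_inv]
  have hsemi := hA.fromBlocks₁₁ B D
  constructor
  · intro h
    refine (hsemi.mp h.posSemidef).posDef_iff_det_ne_zero.mpr ?_
    exact right_ne_zero_of_mul (hdet ▸ h.det_pos.ne')
  · intro h
    refine (hsemi.mpr h.posSemidef).posDef_iff_det_ne_zero.mpr ?_
    rw [hdet]
    exact mul_ne_zero hA.det_pos.ne' h.det_pos.ne'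

theorem IsHermitian.posDef_one_sub_iff {K : Matrix n n 𝕜} (hK : K.IsHermitian) :
    (1 - K).PosDef ↔ ∀ μ ∈ spectrum ℝ K, μ < 1 := by
  rw [← isStrictlyPositive_iff_posDef,
    StarOrderedRing.isStrictlyPositive_iff_spectrum_pos (R := ℝ) _ (isHermitian_one.sub hK),
    ← map_one (algebraMap ℝ _), ← spectrum.singleton_sub_eq, Set.singleton_sub,
    Set.forall_mem_image]
  simp only [sub_pos]

theorem PosDef.sub_of_spectrum_inv_mul_lt_one {S N : Matrix n n 𝕜} (hS : S.PosDef)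
    (hN : N.IsHermitian) (h : ∀ μ ∈ spectrum ℝ (S⁻¹ * N), μ < 1) : (S - N).PosDef := by
  obtain ⟨R, hRunit, hR, rfl⟩ : ∃ R : Matrix n n 𝕜, IsUnit R ∧ R.IsHermitian ∧ S = R * R :=
    ⟨CFC.sqrt S, CFC.isUnit_sqrt_iff_isStrictlyPositive.mpr hS.isStrictlyPositive,
      (CFC.sqrt_nonneg S).isSelfAdjoint, (CFC.sqrt_mul_sqrt_self S hS.posSemidef.nonneg).symm⟩
  have hdet : IsUnit R.det := (isUnit_iff_isUnit_det R).mp hRunit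
  set K := R⁻¹ * N * R⁻¹ with hKdef
  have hK : K.IsHermitian := by
    simpa [hR.inv.eq] using isHermitian_mul_mul_conjTranspose R⁻¹ hN
  have hspec : spectrum ℝ K = spectrum ℝ ((R * R)⁻¹ * N) := by
    rw [← spectrum.units_conjugate (a := (R * R)⁻¹ * N) (u := hRunit.unit), coe_units_inv,
      hRunit.unit_spec, Matrix.mul_inv_rev, Matrix.mul_assoc R⁻¹,
      mul_nonsing_inv_cancel_left _ _ hdet]
  have hsub : R * R - N = star R * (1 - K) * R := by
    rw [star_eq_conjTranspose, hR.eq, Matrix.mul_sub, Matrix.sub_mul, Matrix.mul_one, hKdef,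
      Matrix.mul_assoc R⁻¹, mul_nonsing_inv_cancel_left _ _ hdet,
      nonsing_inv_mul_cancel_right _ _ hdet]
  rw [hsub, hRunit.posDef_star_left_conjugate_iff, hK.posDef_one_sub_iff, hspec]
  exact h

end Matrix

/-- Lyapunov matrix positivity in Corollary 1: if `P > 0`, `P̃ > 0` and every real
eigenvalue of the DC loop-gain matrix `C₁ P⁻¹ C₁ᵀ Ĉ₂ P̃⁻¹ Ĉ₂ᵀ` is less than `1`,
then the block matrix `[[P, −C₁ᵀĈ₂], [−Ĉ₂ᵀC₁, P̃]]` is positive definite;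
equivalently, the quadratic form `W(x, x̃) = xᵀPx + x̃ᵀP̃x̃ − 2 xᵀC₁ᵀĈ₂x̃` is
positive definite. -/
theorem lyapunov_block_matrix_posdef
    (n m p : ℕ)
    (P : Matrix (Fin n) (Fin n) ℝ) (Pt : Matrix (Fin m) (Fin m) ℝ)
    (C₁ : Matrix (Fin p) (Fin n) ℝ) (Ch₂ : Matrix (Fin p) (Fin m) ℝ)
    (hP : P.PosDef) (hPt : Pt.PosDef)
    (hspec : ∀ μ : ℝ, μ ∈ spectrum ℝ (C₁ * P⁻¹ * C₁ᵀ * Ch₂ * Pt⁻¹ * Ch₂ᵀ) → μ < 1) :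
    (Matrix.fromBlocks P (-(C₁ᵀ * Ch₂)) (-(Ch₂ᵀ * C₁)) Pt).PosDef
    ∧ (∀ (x : Fin n → ℝ) (xt : Fin m → ℝ), ¬(x = 0 ∧ xt = 0) →
        0 < x ⬝ᵥ (P *ᵥ x) + xt ⬝ᵥ (Pt *ᵥ xt) - 2 * (x ⬝ᵥ ((C₁ᵀ * Ch₂) *ᵥ xt))) := by
  set N := Ch₂ᵀ * (C₁ * P⁻¹ * C₁ᵀ) * Ch₂
  have hN : N.IsHermitian := by
    simpa using isHermitian_conjTranspose_mul_mul Ch₂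
      (isHermitian_mul_mul_conjTranspose C₁ hP.inv.isHermitian)
  have hloop : ∀ μ ∈ spectrum ℝ (Pt⁻¹ * N), μ < 1 := by
    intro μ hμ
    rcases eq_or_ne μ 0 with rfl | hμ0
    · exact one_pos
    · refine hspec μ ?_
      rw [Matrix.mul_assoc _ Pt⁻¹, mem_spectrum_mul_comm_of_ne_zero _ _ hμ0]
      simpa [N, Matrix.mul_assoc] using hμ
  have hblock : (fromBlocks P (-(C₁ᵀ * Ch₂)) (-(C₁ᵀ * Ch₂))ᵀ Pt).PosDef := by
    rw [← conjTranspose_eq_transpose_of_trivial (-(C₁ᵀ * Ch₂)), hP.posDef_fromBlocks₁₁_iff]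
    simpa [N, Matrix.mul_assoc] using hPt.sub_of_spectrum_inv_mul_lt_one hN hloop
  refine ⟨by simpa [transpose_mul] using hblock, fun x xt hx => ?_⟩
  have hv : Sum.elim x xt ≠ 0 := fun h =>
    hx (Sum.elim_eq_iff.mp (h.trans Sum.elim_zero_zero.symm))
  have hpos := hblock.dotProduct_mulVec_pos hv
  rw [star_trivial, sumElim_dotProduct_fromBlocks_transpose_mulVec, neg_mulVec,
    dotProduct_neg] at hpos
  linarith
end
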